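/- arXiv:2303.02683 — 4 statements merged into one kernel-verified Lean document; each statement's English description precedes it below -/
import Mathlib

section
/- For nonzero polynomials P and R (over a field or ℤ), α(P) ≤ α(P·R), where α(Q) is the minimum over monomials m of Q of maximal total degree of the maximum exponent of any single variable in m. -/
attribute [local instance] Classical.propDecidable

/-- `alphaP Q` is the minimum `k` such that some monomial of `Q` with nonzero
coefficient has total degree equal to `Q.totalDegree` and every individual
variable exponent at most `k`. -/
noncomputable def alphaP {n : ℕ} (Q : MvPolynomial (Fin n) ℤ) : ℕ :=
  sInf {k | ∃ m ∈ Q.support, (∑ i, m i) = Q.totalDegree ∧ ∀ i, m i ≤ k}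

/-!
Over a domain total degrees add, so if `m = a + b` is a monomial of `P * R` of top degree, with
`a` from `P` and `b` from `R`, then `a` must be of top degree in `P`. Since `a ≤ m` coordinatewise,
every exponent bound for `m` is one for `a`.
-/

namespace MvPolynomial

variable {σ R : Type*} [CommSemiring R] [NoZeroDivisors R]

theorem exists_le_of_mem_support_mul_of_degree_eq_totalDegree {p q : MvPolynomial σ R}
    {m : σ →₀ ℕ} (hm : m ∈ (p * q).support) (hdeg : m.degree = (p * q).totalDegree) :
    ∃ a ∈ p.support, a.degree = p.totalDegree ∧ a ≤ m := by
  have hpq : p * q ≠ 0 := by rintro h; simp [h] at hm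
  obtain ⟨a, ha, b, hb, rfl⟩ := Finset.mem_add.mp (support_mul p q hm)
  have hdeg_a : a.degree ≤ p.totalDegree := le_totalDegree ha
  have hdeg_b : b.degree ≤ q.totalDegree := le_totalDegree hb
  rw [map_add, totalDegree_mul_of_isDomain (left_ne_zero_of_mul hpq)
    (right_ne_zero_of_mul hpq)] at hdeg
  exact ⟨a, ha, by omega, le_self_add⟩

end MvPolynomial

open MvPolynomial MonomialOrder

theorem alphaP_le_of_mem_support {n : ℕ} {Q : MvPolynomial (Fin n) ℤ} {m : Fin n →₀ ℕ}
    (hm : m ∈ Q.support) (hdeg : m.degree = Q.totalDegree) {k : ℕ} (hk : ∀ i, m i ≤ k) :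
    alphaP Q ≤ k :=
  Nat.sInf_le ⟨m, hm, by rwa [← Finsupp.degree_eq_sum], hk⟩

theorem exists_mem_support_degree_eq_totalDegree_le_alphaP {n : ℕ} {Q : MvPolynomial (Fin n) ℤ}
    (hQ : Q ≠ 0) :
    ∃ m ∈ Q.support, m.degree = Q.totalDegree ∧ ∀ i, m i ≤ alphaP Q := by
  have hne : {k | ∃ m ∈ Q.support, (∑ i, m i) = Q.totalDegree ∧ ∀ i, m i ≤ k}.Nonempty :=
    ⟨_, degLex.degree Q, degLex.degree_mem_support hQ,
      by rw [← Finsupp.degree_eq_sum, degree_degLexDegree], fun i => Finsupp.le_degree i _⟩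
  obtain ⟨m, hm, hdeg, hk⟩ := Nat.sInf_mem hne
  exact ⟨m, hm, by rwa [Finsupp.degree_eq_sum], hk⟩

/-- For nonzero polynomials `P` and `R`, `α(P) ≤ α(P·R)`. -/
theorem alphaP_le_alphaP_mul {n : ℕ} (P R : MvPolynomial (Fin n) ℤ)
    (hP : P ≠ 0) (hR : R ≠ 0) : alphaP P ≤ alphaP (P * R) := by
  obtain ⟨m, hm, hdeg, hk⟩ :=
    exists_mem_support_degree_eq_totalDegree_le_alphaP (mul_ne_zero hP hR)
  obtain ⟨a, ha, hdeg_a, ham⟩ := exists_le_of_mem_support_mul_of_degree_eq_totalDegree hm hdeg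
  exact alphaP_le_of_mem_support ha hdeg_a fun i => (ham i).trans (hk i)
end

section
/- Let G be a graph with orientation O in which the maximum in-degree is k. If the number of even Eulerian subgraphs of O differs from the number of odd Eulerian subgraphs of O, then AT(G) − 1 ≤ k. -/
attribute [local instance] Classical.propDecidable

/-- The graph polynomial `∏_{i<j, {v_i,v_j} ∈ E} (x_i - x_j)`. -/
noncomputable def graphPoly {n : ℕ} (G : SimpleGraph (Fin n)) : MvPolynomial (Fin n) ℤ :=
  ∏ p ∈ Finset.univ.filter (fun p : Fin n × Fin n => p.1 < p.2 ∧ G.Adj p.1 p.2),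
    (MvPolynomial.X p.1 - MvPolynomial.X p.2)

/-- The Alon–Tarsi number `AT(G) = α(f_G) + 1`. -/
noncomputable def AT {n : ℕ} (G : SimpleGraph (Fin n)) : ℕ := alphaP (graphPoly G) + 1

/-- `dir` is an orientation of the graph `G`: every edge receives exactly one direction. -/
def IsOrientation {n : ℕ} (G : SimpleGraph (Fin n)) (dir : Fin n → Fin n → Prop) : Prop :=
  (∀ u v, dir u v → G.Adj u v) ∧ (∀ u v, G.Adj u v → (dir u v ↔ ¬ dir v u))

/-- The in-degree of a vertex in an orientation. -/
noncomputable def inDeg {n : ℕ} (dir : Fin n → Fin n → Prop) (v : Fin n) : ℕ :=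
  (Finset.univ.filter fun u => dir u v).card

/-- An Eulerian subgraph of an orientation: a set of directed edges of the orientation in
which every vertex has in-degree equal to out-degree. -/
def IsEulerianSub {n : ℕ} (dir : Fin n → Fin n → Prop) (A : Finset (Fin n × Fin n)) : Prop :=
  (∀ p ∈ A, dir p.1 p.2) ∧
  ∀ v, (A.filter fun p => p.2 = v).card = (A.filter fun p => p.1 = v).card

/-! Orient each edge of `G` along `dir`: up to sign, the graph polynomial becomes the product of
`x_v - x_u` over the arcs `u → v`. Expanding, a set `T` of arcs at which the tail variable is
chosen contributes `(-1)^|T|` times the monomial whose exponent at `v` is the in-degree of `v`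
minus the in-degree of `v` in `T` plus its out-degree in `T`. So the coefficient of
`∏ x_v ^ indeg v` counts Eulerian subgraphs with sign `(-1)^|T|`: it is `±(#even - #odd) ≠ 0`.
As `f_G` is homogeneous, this monomial has maximal degree, and its exponents are at most `k`. -/

open Finset MvPolynomial

section ArcProduct

variable {σ R : Type*} [DecidableEq σ] [CommRing R]

noncomputable def inDegrees (T : Finset (σ × σ)) : σ →₀ ℕ := ∑ a ∈ T, Finsupp.single a.2 1

noncomputable def outDegrees (T : Finset (σ × σ)) : σ →₀ ℕ := ∑ a ∈ T, Finsupp.single a.1 1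

lemma inDegrees_apply (T : Finset (σ × σ)) (v : σ) : inDegrees T v = #{a ∈ T | a.2 = v} := by
  rw [inDegrees, Finsupp.finsetSum_apply, card_filter]
  simp only [Finsupp.single_apply]

lemma outDegrees_apply (T : Finset (σ × σ)) (v : σ) : outDegrees T v = #{a ∈ T | a.1 = v} := by
  rw [outDegrees, Finsupp.finsetSum_apply, card_filter]
  simp only [Finsupp.single_apply]

lemma prod_X_sub_X_eq_sum (D : Finset (σ × σ)) :
    ∏ a ∈ D, (X a.2 - X a.1 : MvPolynomial σ R)
      = ∑ T ∈ D.powerset, monomial (outDegrees T + inDegrees (D \ T)) ((-1) ^ #T) := by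
  simp_rw [sub_eq_neg_add, prod_add]
  refine sum_congr rfl fun T _ => ?_
  have tails : ∏ a ∈ T, (-X a.1 : MvPolynomial σ R) = monomial (outDegrees T) ((-1) ^ #T) := by
    simp only [outDegrees, ← prod_const, monomial_sum_prod, ← C_mul_X_eq_monomial, map_neg,
      map_one, one_mul]
  have heads : ∏ a ∈ D \ T, (X a.2 : MvPolynomial σ R) = monomial (inDegrees (D \ T)) 1 := by
    simp only [inDegrees, monomial_sum_one, X]
  rw [tails, heads, monomial_mul, mul_one]

lemma coeff_inDegrees_prod_X_sub_X (D : Finset (σ × σ)) :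
    coeff (inDegrees D) (∏ a ∈ D, (X a.2 - X a.1 : MvPolynomial σ R))
      = ∑ T ∈ D.powerset with outDegrees T = inDegrees T, (-1) ^ #T := by
  rw [prod_X_sub_X_eq_sum, coeff_sum, sum_filter]
  refine sum_congr rfl fun T hT => ?_
  have hsplit : inDegrees D = inDegrees T + inDegrees (D \ T) := by
    rw [inDegrees, inDegrees, inDegrees, ← sum_sdiff (mem_powerset.mp hT), add_comm]
  simp only [coeff_monomial, hsplit, add_left_inj]

end ArcProduct

lemma sum_neg_one_pow_card {ι : Type*} (s : Finset (Finset ι)) :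
    ∑ A ∈ s, (-1 : ℤ) ^ #A = #{A ∈ s | Even #A} - #{A ∈ s | Odd #A} := by
  have even : ∑ A ∈ s with Even #A, (-1 : ℤ) ^ #A = #{A ∈ s | Even #A} := by
    rw [sum_congr rfl fun A hA => (mem_filter.mp hA).2.neg_one_pow]
    simp
  have odd : ∑ A ∈ s with Odd #A, (-1 : ℤ) ^ #A = -#{A ∈ s | Odd #A} := by
    rw [sum_congr rfl fun A hA => (mem_filter.mp hA).2.neg_one_pow]
    simp
  rw [← sum_filter_add_sum_filter_not s (fun A => Even #A)]
  simp only [Nat.not_even_iff_odd, even, odd, sub_eq_add_neg]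

lemma MvPolynomial.IsHomogeneous.sum_eq_totalDegree {σ R : Type*} [Fintype σ] [CommSemiring R]
    {φ : MvPolynomial σ R} {N : ℕ} (hφ : φ.IsHomogeneous N) {m : σ →₀ ℕ} (hm : m ∈ φ.support) :
    ∑ i, m i = φ.totalDegree := by
  rw [hφ.totalDegree (by rintro rfl; simp at hm), ← Finsupp.degree_eq_sum,
    Finsupp.degree_eq_weight_one]
  exact hφ (mem_support_iff.mp hm)

section Orientation

variable {n : ℕ} {G : SimpleGraph (Fin n)} {dir : Fin n → Fin n → Prop}

lemma IsOrientation.dir_swap_iff (hor : IsOrientation G dir) {i j : Fin n} (hij : G.Adj i j) :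
    dir j i ↔ ¬ dir i j := by
  rw [hor.2 i j hij, not_not]

noncomputable def arcs (dir : Fin n → Fin n → Prop) : Finset (Fin n × Fin n) := {a | dir a.1 a.2}

lemma inDegrees_arcs_apply (v : Fin n) : inDegrees (arcs dir) v = inDeg dir v := by
  rw [inDegrees_apply, inDeg, arcs, filter_filter]
  refine card_nbij' Prod.fst (fun u => (u, v)) ?_ ?_ ?_ ?_
  · rintro ⟨u, w⟩ h
    simp only [coe_filter, mem_univ, true_and, Set.mem_ofPred_eq] at h ⊢
    obtain ⟨h, rfl⟩ := h
    exact h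
  · intro u; simp
  · rintro ⟨u, w⟩; simp +contextual
  · intro u; simp

lemma isEulerianSub_iff {A : Finset (Fin n × Fin n)} :
    IsEulerianSub dir A ↔ A ⊆ arcs dir ∧ outDegrees A = inDegrees A := by
  simp [IsEulerianSub, arcs, subset_iff, Finsupp.ext_iff, inDegrees_apply, outDegrees_apply,
    eq_comm]

lemma filter_powerset_arcs_eq :
    {A ∈ (arcs dir).powerset | outDegrees A = inDegrees A}
      = ({A | IsEulerianSub dir A} : Finset (Finset (Fin n × Fin n))) := by
  ext A
  simp [isEulerianSub_iff]

lemma graphPoly_eq_unit_mul_prod_arcs (hor : IsOrientation G dir) :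
    ∃ u : ℤˣ, graphPoly G = C (u : ℤ) * ∏ a ∈ arcs dir, (X a.2 - X a.1) := by
  set E : Finset (Fin n × Fin n) := {p | p.1 < p.2 ∧ G.Adj p.1 p.2}
  let orient (p : Fin n × Fin n) := if dir p.1 p.2 then p else p.swap
  let sort (a : Fin n × Fin n) := if a.1 < a.2 then a else a.swap
  let sign (p : Fin n × Fin n) : ℤˣ := if dir p.1 p.2 then -1 else 1
  have factor (p : Fin n × Fin n) :
      (X p.1 - X p.2 : MvPolynomial (Fin n) ℤ)
        = C (sign p : ℤ) * (X (orient p).2 - X (orient p).1) := by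
    by_cases h : dir p.1 p.2 <;> simp [sign, orient, h]
  have reindex : ∏ p ∈ E, (X (orient p).2 - X (orient p).1 : MvPolynomial (Fin n) ℤ)
      = ∏ a ∈ arcs dir, (X a.2 - X a.1) := by
    refine prod_nbij' orient sort ?_ ?_ ?_ ?_ (fun _ _ => rfl)
    all_goals rintro ⟨i, j⟩ hp
    all_goals simp only [E, arcs, mem_filter, mem_univ, true_and] at hp
    · obtain ⟨-, hadj⟩ := hp
      by_cases h : dir i j <;> simp [orient, arcs, h, hor.dir_swap_iff hadj]
    · have hadj := hor.1 i j hp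
      rcases lt_or_gt_of_ne hadj.ne with h | h <;> simp [sort, E, h, hadj, hadj.symm, h.not_gt]
    · obtain ⟨hlt, -⟩ := hp
      by_cases h : dir i j <;> simp [orient, sort, h, hlt, hlt.not_gt]
    · have hadj := hor.1 i j hp
      rcases lt_or_gt_of_ne hadj.ne with h | h <;>
        simp [sort, orient, h, hp, h.not_gt, hor.dir_swap_iff hadj]
  refine ⟨∏ p ∈ E, sign p, ?_⟩
  rw [graphPoly, prod_congr rfl fun p _ => factor p, prod_mul_distrib, ← map_prod, Units.coe_prod,
    reindex]

lemma isHomogeneous_graphPoly (G : SimpleGraph (Fin n)) :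
    (graphPoly G).IsHomogeneous #{p : Fin n × Fin n | p.1 < p.2 ∧ G.Adj p.1 p.2} := by
  rw [card_eq_sum_ones]
  exact IsHomogeneous.prod _ _ _ fun p _ => (isHomogeneous_X ℤ p.1).sub (isHomogeneous_X ℤ p.2)

end Orientation

/-- Alon–Tarsi: if in an orientation with maximum in-degree `k` the numbers of even and odd
Eulerian subgraphs differ, then `AT(G) - 1 ≤ k`. -/
theorem AT_le_of_eulerian_counts {n : ℕ} (G : SimpleGraph (Fin n))
    (dir : Fin n → Fin n → Prop) (k : ℕ)
    (hor : IsOrientation G dir) (hk : ∀ v, inDeg dir v ≤ k)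
    (hne : (Finset.univ.filter fun A : Finset (Fin n × Fin n) =>
              IsEulerianSub dir A ∧ Even A.card).card ≠
           (Finset.univ.filter fun A : Finset (Fin n × Fin n) =>
              IsEulerianSub dir A ∧ Odd A.card).card) :
    AT G - 1 ≤ k := by
  obtain ⟨u, hG⟩ := graphPoly_eq_unit_mul_prod_arcs hor
  have hcoeff : coeff (inDegrees (arcs dir)) (graphPoly G) ≠ 0 := by
    rw [hG, coeff_C_mul, coeff_inDegrees_prod_X_sub_X, filter_powerset_arcs_eq,
      sum_neg_one_pow_card, filter_filter, filter_filter]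
    exact mul_ne_zero u.ne_zero (sub_ne_zero.mpr (mod_cast hne))
  have hsupp := mem_support_iff.mpr hcoeff
  suffices alphaP (graphPoly G) ≤ k by simpa [AT] using this
  exact Nat.sInf_le ⟨_, hsupp, (isHomogeneous_graphPoly G).sum_eq_totalDegree hsupp,
    fun v => (inDegrees_arcs_apply v).trans_le (hk v)⟩
end

section
/- For an augmented orientation (G, D, O), the augmented graph polynomial satisfies W_{G,D} = f_G · P for some nonzero polynomial P; consequently α(f_G) ≤ α(W_{G,D}). -/
attribute [local instance] Classical.propDecidable

/-- The augmented graph polynomial `W_{G,D} = ∏_{i<j, e={v_i,v_j}∈E} (x_i^{D(e)} - x_j^{D(e)})`. -/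
noncomputable def augPoly {n : ℕ} (G : SimpleGraph (Fin n)) (D : Sym2 (Fin n) → ℕ) :
    MvPolynomial (Fin n) ℤ :=
  ∏ p ∈ Finset.univ.filter (fun p : Fin n × Fin n => p.1 < p.2 ∧ G.Adj p.1 p.2),
    (MvPolynomial.X p.1 ^ D s(p.1, p.2) - MvPolynomial.X p.2 ^ D s(p.1, p.2))


/-! Each factor `x_i^d - x_j^d` of `W_{G,D}` is `x_i - x_j` times the homogeneous geometric sum
`∑_{k<d} x_i^k x_j^(d-1-k)`, so `W_{G,D} = f_G · P` with `f_G` and `P` homogeneous, and `P ≠ 0`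
because `W_{G,D} ≠ 0`. For a product of homogeneous polynomials every monomial of the product is a
sum of a monomial of each factor, all of top degree; so a top-degree monomial of `W_{G,D}` with all
exponents `≤ k` yields one of `f_G` with all exponents `≤ k`. -/

open MvPolynomial Finset

namespace MvPolynomial

variable {σ R : Type*}

theorem IsHomogeneous.sum_eq_totalDegree_s5 [Fintype σ] [CommSemiring R] {φ : MvPolynomial σ R}
    {n : ℕ} (hφ : φ.IsHomogeneous n) {m : σ →₀ ℕ} (hm : m ∈ φ.support) :
    ∑ i, m i = φ.totalDegree := by
  rw [← Finsupp.degree_eq_sum, hφ.totalDegree (ne_zero_iff.mpr ⟨m, mem_support_iff.mp hm⟩),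
    Finsupp.degree_eq_weight_one]
  exact hφ (mem_support_iff.mp hm)

theorem isHomogeneous_geom_sum₂ [CommSemiring R] (i j : σ) (d : ℕ) :
    (∑ k ∈ range d, X i ^ k * X j ^ (d - 1 - k) : MvPolynomial σ R).IsHomogeneous (d - 1) :=
  IsHomogeneous.sum _ _ _ fun k hk => by
    convert (isHomogeneous_X_pow (R := R) i k).mul (isHomogeneous_X_pow j (d - 1 - k)) using 1
    have := mem_range.mp hk
    omega

theorem X_pow_sub_X_pow_ne_zero [CommRing R] [Nontrivial R] {i j : σ} (hij : i ≠ j) {d : ℕ}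
    (hd : d ≠ 0) : (X i ^ d - X j ^ d : MvPolynomial σ R) ≠ 0 := by
  rw [sub_ne_zero, X_pow_eq_monomial, X_pow_eq_monomial]
  exact fun h => hij <| Finsupp.single_left_injective hd <| monomial_left_injective one_ne_zero h

end MvPolynomial

theorem alphaP_le_alphaP_mul_s5 {n : ℕ} {Q R : MvPolynomial (Fin n) ℤ} {a b : ℕ}
    (hQ : Q.IsHomogeneous a) (hR : R.IsHomogeneous b) (hQR : Q * R ≠ 0) :
    alphaP Q ≤ alphaP (Q * R) := by
  obtain ⟨m₀, hm₀⟩ := support_nonempty.mpr hQR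
  refine le_csInf ⟨∑ i, m₀ i, m₀, hm₀, (hQ.mul hR).sum_eq_totalDegree_s5 hm₀,
    fun i => single_le_sum (fun _ _ => Nat.zero_le _) (mem_univ i)⟩ ?_
  rintro k ⟨m, hm, -, hmk⟩
  obtain ⟨u, hu, v, -, rfl⟩ := mem_add.mp (support_mul Q R hm)
  exact Nat.sInf_le ⟨u, hu, hQ.sum_eq_totalDegree_s5 hu,
    fun i => (Nat.le_add_right (u i) (v i)).trans (hmk i)⟩

section AugmentedOrientation

variable {n : ℕ} (G : SimpleGraph (Fin n)) (D : Sym2 (Fin n) → ℕ)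

noncomputable def orientedEdges : Finset (Fin n × Fin n) :=
  univ.filter fun p : Fin n × Fin n => p.1 < p.2 ∧ G.Adj p.1 p.2

noncomputable def augCofactor : MvPolynomial (Fin n) ℤ :=
  ∏ p ∈ orientedEdges G, ∑ k ∈ range (D s(p.1, p.2)),
    X p.1 ^ k * X p.2 ^ (D s(p.1, p.2) - 1 - k)

theorem augPoly_eq_graphPoly_mul_augCofactor : augPoly G D = graphPoly G * augCofactor G D := by
  rw [augPoly, graphPoly, augCofactor, orientedEdges, ← prod_mul_distrib]
  exact prod_congr rfl fun p _ => by rw [mul_comm, geom_sum₂_mul]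

theorem isHomogeneous_graphPoly_s5 : (graphPoly G).IsHomogeneous (∑ _p ∈ orientedEdges G, 1) :=
  IsHomogeneous.prod _ _ _ fun _ _ => (isHomogeneous_X _ _).sub (isHomogeneous_X _ _)

theorem isHomogeneous_augCofactor :
    (augCofactor G D).IsHomogeneous (∑ p ∈ orientedEdges G, (D s(p.1, p.2) - 1)) :=
  IsHomogeneous.prod _ _ _ fun p _ => isHomogeneous_geom_sum₂ p.1 p.2 _

variable {G D}

theorem augPoly_ne_zero (hD : ∀ e ∈ G.edgeSet, 0 < D e) : augPoly G D ≠ 0 := by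
  refine prod_ne_zero_iff.mpr fun p hp => ?_
  have hadj : G.Adj p.1 p.2 := (mem_filter.mp hp).2.2
  exact X_pow_sub_X_pow_ne_zero hadj.ne (hD _ (G.mem_edgeSet.mpr hadj)).ne'

end AugmentedOrientation

/-- `W_{G,D} = f_G · P` for some nonzero polynomial `P`; consequently
`α(f_G) ≤ α(W_{G,D})`. -/
theorem augPoly_eq_graphPoly_mul {n : ℕ} (G : SimpleGraph (Fin n)) (D : Sym2 (Fin n) → ℕ)
    (hD : ∀ e ∈ G.edgeSet, 0 < D e) :
    (∃ P : MvPolynomial (Fin n) ℤ, P ≠ 0 ∧ augPoly G D = graphPoly G * P) ∧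
    alphaP (graphPoly G) ≤ alphaP (augPoly G D) := by
  have hfactor := augPoly_eq_graphPoly_mul_augCofactor G D
  have hprod : graphPoly G * augCofactor G D ≠ 0 := hfactor ▸ augPoly_ne_zero hD
  refine ⟨⟨augCofactor G D, right_ne_zero_of_mul hprod, hfactor⟩, ?_⟩
  rw [hfactor]
  exact alphaP_le_alphaP_mul_s5 (isHomogeneous_graphPoly_s5 G) (isHomogeneous_augCofactor G D) hprod
end

section
/- In any internal 3-orientation of a triangular graph, no interior edge is directed toward an exterior vertex. -/
attribute [local instance] Classical.propDecidable

/-- A (combinatorial) plane triangulation on vertex set `Fin n`, given by a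
counterclockwise rotation system together with a distinguished outer triangle.
All faces (traced by the rotation system) are triangles, and the Euler count
`|E| = 3n - 6` guarantees genus `0`. -/
structure PlaneTriangulation (n : ℕ) where
  G : SimpleGraph (Fin n)
  conn : G.Connected
  /-- `next v u` is the neighbour of `v` following `u` in counterclockwise order around `v`. -/
  next : Fin n → Fin n → Fin n
  next_adj : ∀ v u, G.Adj v u → G.Adj v (next v u)
  /-- the rotation at `v` is a single cycle on the neighbourhood of `v` -/
  next_cyclic : ∀ v u w, G.Adj v u → G.Adj v w → ∃ k, (fun x => next v x)^[k] u = w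
  /-- every face is a triangle: the face-tracing map on darts has order 3 -/
  faces_tri : ∀ u v, G.Adj u v →
    (fun d : Fin n × Fin n => (d.2, next d.2 d.1))^[3] (u, v) = (u, v)
  /-- the three outer (exterior) vertices, in counterclockwise order -/
  outer : Fin 3 → Fin n
  outer_inj : Function.Injective outer
  outer_adj : ∀ i j, i ≠ j → G.Adj (outer i) (outer j)
  /-- the outer triangle bounds a face -/
  outer_face : next (outer 2) (outer 0) = outer 1 ∧ next (outer 1) (outer 2) = outer 0 ∧
    next (outer 0) (outer 1) = outer 2
  /-- Euler's relation for plane triangulations -/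
  euler : G.edgeSet.ncard = 3 * n - 6

/-- A vertex is interior when it is not one of the three outer vertices. -/
def PlaneTriangulation.InteriorVertex {n : ℕ} (T : PlaneTriangulation n) (v : Fin n) : Prop :=
  ∀ i, v ≠ T.outer i

/-- An edge is interior when it is not an edge of the outer triangle. -/
def PlaneTriangulation.InteriorEdge {n : ℕ} (T : PlaneTriangulation n) (u v : Fin n) : Prop :=
  T.G.Adj u v ∧ ¬ (∃ i j, u = T.outer i ∧ v = T.outer j)

/-- An internal 3-orientation: an orientation of the interior edges in which every
interior vertex has in-degree exactly 3. -/
structure Internal3Orientation {n : ℕ} (T : PlaneTriangulation n) where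
  /-- `dir u v`: the interior edge `{u,v}` is directed from `u` to `v` -/
  dir : Fin n → Fin n → Prop
  dir_edge : ∀ u v, dir u v → T.InteriorEdge u v
  total : ∀ u v, T.InteriorEdge u v → (dir u v ↔ ¬ dir v u)
  indeg : ∀ v, T.InteriorVertex v → {u | dir u v}.ncard = 3

/-- The data of a realizer: a partition-with-orientation of the interior edges into three
colour classes (red = 0, green = 1, blue = 2) such that every interior vertex has in-degree
one in each colour.  `col u v = some c` means the edge `{u,v}` is directed from `u` to `v`
and has colour `c`. -/
structure PreRealizer {n : ℕ} (T : PlaneTriangulation n) where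
  col : Fin n → Fin n → Option (Fin 3)
  col_edge : ∀ u v c, col u v = some c → T.InteriorEdge u v
  col_total : ∀ u v, T.InteriorEdge u v → ((col u v).isSome ↔ col v u = none)
  indeg_one : ∀ v c, T.InteriorVertex v → {u | col u v = some c}.ncard = 1

/-- The type of the dart from `v` towards `u`, encoding the counterclockwise pattern
incoming red (0), outgoing blue (1), incoming green (2), outgoing red (3),
incoming blue (4), outgoing green (5). -/
def PreRealizer.dartType {n : ℕ} {T : PlaneTriangulation n} (R : PreRealizer T)
    (v u : Fin n) : ℕ :=
  if R.col u v = some 0 then 0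
  else if R.col v u = some 2 then 1
  else if R.col u v = some 1 then 2
  else if R.col v u = some 0 then 3
  else if R.col u v = some 2 then 4
  else 5

/-- The degree of a vertex. -/
noncomputable def PlaneTriangulation.deg {n : ℕ} (T : PlaneTriangulation n) (v : Fin n) : ℕ :=
  {u | T.G.Adj v u}.ncard

/-- A realizer (Schnyder wood): starting at the unique incoming red edge, the types of the
darts around any interior vertex are (weakly) increasing along one full counterclockwise
rotation; this is exactly the prescribed cyclic pattern. -/
structure Realizer {n : ℕ} (T : PlaneTriangulation n) extends PreRealizer T where
  pattern : ∀ v, T.InteriorVertex v → ∀ u₀, col u₀ v = some 0 →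
    ∀ k l : ℕ, k ≤ l → l < T.deg v →
      toPreRealizer.dartType v ((fun x => T.next v x)^[k] u₀) ≤
      toPreRealizer.dartType v ((fun x => T.next v x)^[l] u₀)

/-- A directed cycle with respect to a directed-edge relation `dir`. -/
structure DirCycle {n : ℕ} (dir : Fin n → Fin n → Prop) where
  len : ℕ
  three_le : 3 ≤ len
  vtx : ZMod len → Fin n
  inj : Function.Injective vtx
  step : ∀ i, dir (vtx i) (vtx (i + 1))

/-- The vertex set of a directed cycle. -/
def DirCycle.vertexSet {n : ℕ} {dir : Fin n → Fin n → Prop} (C : DirCycle dir) :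
    Set (Fin n) := Set.range C.vtx

/-- The set of vertices strictly inside a separating vertex set `S`: the vertices not in `S`
from which every walk to an exterior vertex meets `S`. -/
def PlaneTriangulation.InsideSet {n : ℕ} (T : PlaneTriangulation n) (S : Set (Fin n)) :
    Set (Fin n) :=
  {w | w ∉ S ∧ ∀ x, ¬ T.InteriorVertex x → ∀ p : T.G.Walk w x, ∃ y ∈ p.support, y ∈ S}

/-- The neighbours of `v` strictly between `u` and `w` in counterclockwise order around `v`. -/
noncomputable def PlaneTriangulation.betweenSet {n : ℕ} (T : PlaneTriangulation n)
    (v u w : Fin n) : Set (Fin n) :=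
  {x | ∃ k, 0 < k ∧ k < sInf {m | 0 < m ∧ (fun y => T.next v y)^[m] u = w} ∧
    (fun y => T.next v y)^[k] u = x}

/-- A directed cycle is counterclockwise when its interior lies to its left: at each vertex
of the cycle, the neighbours counterclockwise between the incoming and the outgoing cycle
edge belong to the closed interior of the cycle. -/
def IsCCW {n : ℕ} (T : PlaneTriangulation n) {dir : Fin n → Fin n → Prop}
    (C : DirCycle dir) : Prop :=
  ∀ i : ZMod C.len, T.betweenSet (C.vtx i) (C.vtx (i - 1)) (C.vtx (i + 1)) ⊆
    C.vertexSet ∪ T.InsideSet C.vertexSet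

/-- A directed cycle is clockwise when its interior lies to its right. -/
def IsCW {n : ℕ} (T : PlaneTriangulation n) {dir : Fin n → Fin n → Prop}
    (C : DirCycle dir) : Prop :=
  ∀ i : ZMod C.len, T.betweenSet (C.vtx i) (C.vtx (i + 1)) (C.vtx (i - 1)) ⊆
    C.vertexSet ∪ T.InsideSet C.vertexSet

/-!
Count directed edges. By Euler's relation the triangulation has `3n - 6` edges, so `3n - 9`
of them are interior, and each interior edge gives exactly one unit of in-degree. The `n - 3`
interior vertices have in-degree `3` each, which already uses up all `3(n - 3)` units, so every
exterior vertex has in-degree `0`.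
-/

open Finset

lemma Finset.card_filter_prod_eq_sum_card_filter {α : Type*} [Fintype α]
    (r : α → α → Prop) : #{p : α × α | r p.1 p.2} = ∑ v, #{u | r u v} := by
  simp only [card_filter, Fintype.sum_prod_type_right]

namespace PlaneTriangulation

lemma three_le {n : ℕ} (T : PlaneTriangulation n) : 3 ≤ n := by
  simpa using Fintype.card_le_of_injective T.outer T.outer_inj

variable {n : ℕ} (T : PlaneTriangulation n)

lemma card_interiorVertex : #{v | T.InteriorVertex v} = n - 3 := by
  have : filter T.InteriorVertex univ = (univ.image T.outer)ᶜ := by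
    ext v
    simp only [mem_filter, mem_univ, true_and, mem_compl, mem_image, not_exists, InteriorVertex]
    exact forall_congr' fun i => ne_comm
  rw [this, card_compl, card_image_of_injective _ T.outer_inj]
  simp

lemma card_outer_darts :
    #{p : Fin n × Fin n | T.G.Adj p.1 p.2 ∧ ∃ i j, p.1 = T.outer i ∧ p.2 = T.outer j} =
      6 := by
  let e : Fin 3 ↪ Fin n := ⟨T.outer, T.outer_inj⟩
  have : filter (fun p : Fin n × Fin n => T.G.Adj p.1 p.2 ∧
      ∃ i j, p.1 = T.outer i ∧ p.2 = T.outer j) univ = univ.offDiag.map (e.prodMap e) := by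
    ext ⟨a, b⟩
    simp only [mem_filter, mem_univ, true_and, mem_map, mem_offDiag, Prod.exists,
      Function.Embedding.coe_prodMap, Prod.map, Prod.mk.injEq]
    constructor
    · rintro ⟨hab, i, j, rfl, rfl⟩
      exact ⟨i, j, fun hij => hab.ne (by rw [hij]), rfl, rfl⟩
    · rintro ⟨i, j, hij, rfl, rfl⟩
      exact ⟨T.outer_adj i j hij, i, j, rfl, rfl⟩
  rw [this, card_map]
  rfl

lemma card_darts : #{p : Fin n × Fin n | T.G.Adj p.1 p.2} = 2 * (3 * n - 6) := by
  rw [card_filter_prod_eq_sum_card_filter, ← T.euler, ← SimpleGraph.coe_edgeFinset,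
    Set.ncard_coe_finset, ← SimpleGraph.sum_degrees_eq_twice_card_edges]
  congr 1
  ext v
  rw [← SimpleGraph.card_neighborFinset_eq_degree]
  congr 1
  ext u
  simp [SimpleGraph.adj_comm]

end PlaneTriangulation

namespace Internal3Orientation

variable {n : ℕ} {T : PlaneTriangulation n} (O : Internal3Orientation T)

lemma not_dir_of_dir {a b : Fin n} (h : O.dir a b) : ¬ O.dir b a :=
  (O.total a b (O.dir_edge a b h)).mp h

lemma dir_or_dir {a b : Fin n} (h : T.InteriorEdge a b) : O.dir a b ∨ O.dir b a := by
  by_contra! hn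
  exact hn.1 ((O.total a b h).mpr hn.2)

lemma adj_iff (a b : Fin n) : T.G.Adj a b ↔
    O.dir a b ∨ O.dir b a ∨ (T.G.Adj a b ∧ ∃ i j, a = T.outer i ∧ b = T.outer j) := by
  constructor
  · intro hab
    by_cases hout : ∃ i j, a = T.outer i ∧ b = T.outer j
    · exact Or.inr (Or.inr ⟨hab, hout⟩)
    · exact (O.dir_or_dir ⟨hab, hout⟩).imp_right Or.inl
  · rintro (h | h | h)
    · exact (O.dir_edge _ _ h).1
    · exact (O.dir_edge _ _ h).1.symm
    · exact h.1

lemma card_darts_eq :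
    #{p : Fin n × Fin n | T.G.Adj p.1 p.2} = 2 * #{p : Fin n × Fin n | O.dir p.1 p.2} + 6 := by
  have hswap : #{p : Fin n × Fin n | O.dir p.2 p.1} = #{p : Fin n × Fin n | O.dir p.1 p.2} :=
    card_equiv (Equiv.prodComm _ _) (by simp)
  have hrev : Disjoint (filter (fun p : Fin n × Fin n => O.dir p.1 p.2) univ)
      (filter (fun p => O.dir p.2 p.1) univ) :=
    disjoint_filter.2 fun _ _ h => O.not_dir_of_dir h
  have hout : Disjoint (filter (fun p : Fin n × Fin n => O.dir p.1 p.2 ∨ O.dir p.2 p.1) univ)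
      (filter (fun p => T.G.Adj p.1 p.2 ∧
        ∃ i j, p.1 = T.outer i ∧ p.2 = T.outer j) univ) := by
    refine disjoint_filter.2 fun p _ h ⟨_, i, j, hi, hj⟩ => ?_
    rcases h with h | h
    · exact (O.dir_edge _ _ h).2 ⟨i, j, hi, hj⟩
    · exact (O.dir_edge _ _ h).2 ⟨j, i, hj, hi⟩
  rw [filter_congr fun p _ => (O.adj_iff p.1 p.2).trans or_assoc.symm, filter_or,
    card_union_of_disjoint hout, filter_or, card_union_of_disjoint hrev, hswap,
    T.card_outer_darts]
  ring

lemma card_arcs : #{p : Fin n × Fin n | O.dir p.1 p.2} = 3 * (n - 3) := by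
  have hdarts := O.card_darts_eq
  rw [T.card_darts] at hdarts
  have hn := T.three_le
  omega

lemma card_indeg_of_interiorVertex {v : Fin n} (hv : T.InteriorVertex v) :
    #{u | O.dir u v} = 3 := by
  rw [← O.indeg v hv, ← Set.ncard_coe_finset, coe_filter]
  simp

lemma card_indeg_eq_zero_of_not_interiorVertex {v : Fin n} (hv : ¬ T.InteriorVertex v) :
    #{u | O.dir u v} = 0 := by
  have htotal : ∑ w, #{u | O.dir u w} = 3 * (n - 3) := by
    rw [← card_filter_prod_eq_sum_card_filter, O.card_arcs]
  have hinterior : ∑ w ∈ filter T.InteriorVertex univ, #{u | O.dir u w} = 3 * (n - 3) := by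
    rw [sum_congr rfl fun w hw => O.card_indeg_of_interiorVertex (mem_filter.1 hw).2, sum_const,
      T.card_interiorVertex, smul_eq_mul, mul_comm]
  have hsplit := sum_filter_add_sum_filter_not univ T.InteriorVertex fun w => #{u | O.dir u w}
  rw [hinterior, htotal] at hsplit
  exact sum_eq_zero_iff.1 (add_eq_left.1 hsplit) v (by simpa using hv)

end Internal3Orientation

/-- In any internal 3-orientation of a triangular graph, no interior edge is directed
toward an exterior vertex. -/
theorem no_edge_to_exterior {n : ℕ} (T : PlaneTriangulation n)
    (O : Internal3Orientation T) (u v : Fin n) (h : O.dir u v) :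
    T.InteriorVertex v := by
  by_contra hv
  have hu : u ∈ filter (O.dir · v) univ := by simpa using h
  exact (card_pos.2 ⟨u, hu⟩).ne' (O.card_indeg_eq_zero_of_not_interiorVertex hv)
end
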